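/- Let P, σ_W², σ_V² > 0 and suppose h_Y ≤ (n/2)·log₂(2πe(σ_W² + P)) and h_Z ≥ (n/2)·log₂(2^{(2/n)h_Y} + 2πe·σ_V²). Then h_Y − h_Z ≤ (n/2)·log₂((σ_W² + P)/(σ_W² + σ_V² + P)). -/

import Mathlib

open Real

/- Normalising by `n / 2`, with `x = (2/n)·h_Y` the bound reads
`h_Y − h_Z ≤ (n/2)·(x − log₂(2^x + c))`, `c = 2πe·σ_V²`. The map `x ↦ x − log₂(2^x + c)`, i.e.
`x ↦ log₂(2^x / (2^x + c))`, is monotone, and the first hypothesis says `2^x ≤ A = 2πe(σ_W² + P)`,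
so the bound is at most `(n/2)·log₂(A / (A + c))`. -/

lemma div_add_le_div_add {a b c : ℝ} (ha : 0 < a) (hab : a ≤ b) (hc : 0 ≤ c) :
    a / (a + c) ≤ b / (b + c) := by
  rw [div_le_div_iff₀ (by positivity) (by linarith)]
  nlinarith

lemma monotone_sub_logb_rpow_add {b c : ℝ} (hb : 1 < b) (hc : 0 ≤ c) :
    Monotone fun x : ℝ => x - logb b (b ^ x + c) := by
  intro x y hxy
  have hb0 : 0 < b := by linarith
  have hlog_ratio : ∀ t : ℝ, t - logb b (b ^ t + c) = logb b (b ^ t / (b ^ t + c)) := fun t => by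
    have := rpow_pos_of_pos hb0 t
    rw [logb_div (by positivity) (by positivity), logb_rpow hb0 hb.ne']
  simp only [hlog_ratio]
  exact logb_le_logb_of_le hb (by have := rpow_pos_of_pos hb0 x; positivity) <|
    div_add_le_div_add (rpow_pos_of_pos hb0 x) (rpow_le_rpow_of_exponent_le hb.le hxy) hc

/-- Core inequality of Lemma 1: if `h_Y ≤ (n/2)·log₂(2πe(σ_W² + P))` and
`h_Z ≥ (n/2)·log₂(2^{(2/n)h_Y} + 2πe·σ_V²)`, then
`h_Y − h_Z ≤ (n/2)·log₂((σ_W² + P)/(σ_W² + σ_V² + P))`. -/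
theorem entropy_difference_bound (n : ℝ) (hn : 0 < n)
    (P σW2 σV2 hY hZ : ℝ) (hP : 0 < P) (hW : 0 < σW2) (hV : 0 < σV2)
    (hhY : hY ≤ (n / 2) * logb 2 (2 * π * exp 1 * (σW2 + P)))
    (hhZ : (n / 2) * logb 2 ((2 : ℝ) ^ ((2 / n) * hY) + 2 * π * exp 1 * σV2) ≤ hZ) :
    hY - hZ ≤ (n / 2) * logb 2 ((σW2 + P) / (σW2 + σV2 + P)) := by
  set c := 2 * π * exp 1 * σV2
  set A := 2 * π * exp 1 * (σW2 + P)
  set x := (2 / n) * hY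
  have hc : 0 < c := by positivity
  have hA : 0 < A := by positivity
  have hYx : hY = (n / 2) * x := by simp only [x]; field_simp
  have hx : x ≤ logb 2 A := by
    rw [hYx] at hhY
    exact le_of_mul_le_mul_left hhY (by positivity)
  have hAc : logb 2 A - logb 2 (2 ^ logb 2 A + c) = logb 2 ((σW2 + P) / (σW2 + σV2 + P)) := by
    rw [rpow_logb two_pos (by norm_num) hA, ← logb_div hA.ne' (by positivity)]
    congr 1
    rw [div_eq_div_iff (by positivity) (by positivity)]
    ring
  calc hY - hZ ≤ (n / 2) * (x - logb 2 ((2 : ℝ) ^ x + c)) := by rw [hYx]; linarith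
    _ ≤ (n / 2) * logb 2 ((σW2 + P) / (σW2 + σV2 + P)) := by
      rw [← hAc]
      exact mul_le_mul_of_nonneg_left (monotone_sub_logb_rpow_add one_lt_two hc.le hx)
        (by positivity)
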